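/- arXiv:1503.00192 — 4 statements merged into one kernel-verified Lean document; each statement's English description precedes it below -/
import Mathlib

section
/- If a sequence of measurable sets E_n in R^d of finite perimeter converges locally to a set E and |E_n| → |E| < ∞, then E_n → E globally, i.e., |E_n Δ E| → 0. -/
open MeasureTheory Filter Metric Set Topology

noncomputable section

/-- De Giorgi perimeter: the set of values `∫_E div F` over admissible vector fields. -/
def perSet (d : ℕ) (E : Set (EuclideanSpace ℝ (Fin d))) : Set ℝ :=
  {p | ∃ F : EuclideanSpace ℝ (Fin d) → EuclideanSpace ℝ (Fin d),
      ContDiff ℝ 1 F ∧ HasCompactSupport F ∧ (∀ x, ‖F x‖ ≤ 1) ∧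
      p = ∫ x in E, ∑ i, fderiv ℝ F x (EuclideanSpace.single i (1:ℝ)) i}

/-- De Giorgi perimeter of a measurable set. -/
def perimeter (d : ℕ) (E : Set (EuclideanSpace ℝ (Fin d))) : ℝ := sSup (perSet d E)

/-- A set has finite perimeter if the defining supremum is finite. -/
def FinitePerimeter (d : ℕ) (E : Set (EuclideanSpace ℝ (Fin d))) : Prop := BddAbove (perSet d E)

/-- Riesz interaction energy. -/
def riesz (d : ℕ) (l : ℝ) (A : Set (EuclideanSpace ℝ (Fin d))) : ℝ :=
  (1/2) * ∫ x in A, ∫ y in A, ‖x - y‖ ^ (-l)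

abbrev E3 := EuclideanSpace ℝ (Fin 3)

/-- Coulomb self-energy in dimension 3. -/
def coulomb (Ω : Set E3) : ℝ := (1/2) * ∫ x in Ω, ∫ y in Ω, ‖x - y‖⁻¹

/-- Liquid drop energy. -/
def ldEnergy (Ω : Set E3) : ℝ := perimeter 3 Ω + coulomb Ω

/-- Minimal liquid drop energy at mass `A`. -/
def ldE (A : ℝ) : ℝ :=
  sInf {e | ∃ Ω : Set E3, MeasurableSet Ω ∧ FinitePerimeter 3 Ω ∧
      volume Ω = ENNReal.ofReal A ∧ e = ldEnergy Ω}



namespace MeasureTheory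

open scoped ENNReal

variable {X : Type*} [MeasurableSpace X] {μ : Measure X} {s t : Set X}

theorem measure_sdiff_le_measure_sdiff_add_tsub (ht : MeasurableSet t) (hμt : μ t ≠ ∞) :
    μ (s \ t) ≤ μ (t \ s) + (μ s - μ t) := by
  have hfin : μ (s ∩ t) ≠ ∞ := measure_ne_top_of_subset inter_subset_right hμt
  refine (ENNReal.add_le_add_iff_left hfin).mp ?_
  calc μ (s ∩ t) + μ (s \ t) = μ s := measure_inter_add_sdiff s ht
    _ ≤ μ t + (μ s - μ t) := le_add_tsub
    _ ≤ μ (s ∩ t) + μ (t \ s) + (μ s - μ t) := by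
      gcongr
      rw [inter_comm]
      exact measure_le_inter_add_sdiff μ t s
    _ = μ (s ∩ t) + (μ (t \ s) + (μ s - μ t)) := add_assoc _ _ _

theorem measure_symmDiff_le_two_mul_measure_sdiff_add_tsub (ht : MeasurableSet t)
    (hμt : μ t ≠ ∞) : μ (symmDiff s t) ≤ 2 * μ (t \ s) + (μ s - μ t) :=
  calc μ (symmDiff s t) ≤ μ (s \ t) + μ (t \ s) := measure_union_le _ _
    _ ≤ μ (t \ s) + (μ s - μ t) + μ (t \ s) := by
      gcongr
      exact measure_sdiff_le_measure_sdiff_add_tsub ht hμt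
    _ = 2 * μ (t \ s) + (μ s - μ t) := by ring

theorem measure_sdiff_le_measure_symmDiff_inter_add (s t K : Set X) :
    μ (t \ s) ≤ μ (symmDiff s t ∩ K) + μ (t \ K) := by
  refine (measure_mono fun x hx => ?_).trans (measure_union_le _ _)
  by_cases hxK : x ∈ K
  · exact Or.inl ⟨Or.inr hx, hxK⟩
  · exact Or.inr ⟨hx.1, hxK⟩

/-- Since `μ (s ∆ t) ≤ 2 μ (t \ s) + (μ s - μ t)`, the part of `s i ∆ t` that local
convergence does not see is controlled by the mass of `t` outside a compact set, which inner
regularity makes small. -/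
theorem tendsto_measure_symmDiff_of_tendsto_measure_symmDiff_inter_isCompact
    [TopologicalSpace X] [T2Space X] [OpensMeasurableSpace X] [μ.InnerRegularCompactLTTop]
    {ι : Type*} {l : Filter ι} {s : ι → Set X} (ht : MeasurableSet t) (hμt : μ t ≠ ∞)
    (hloc : ∀ K, IsCompact K → Tendsto (fun i => μ (symmDiff (s i) t ∩ K)) l (𝓝 0))
    (hvol : Tendsto (fun i => μ (s i)) l (𝓝 (μ t))) :
    Tendsto (fun i => μ (symmDiff (s i) t)) l (𝓝 0) := by
  rw [ENNReal.tendsto_nhds_zero]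
  intro ε hε
  obtain ⟨K, -, hK, hKt⟩ := ht.exists_isCompact_sdiff_lt hμt (ENNReal.half_pos hε.ne').ne'
  have hbound : Tendsto (fun i => 2 * μ (symmDiff (s i) t ∩ K) + 2 * μ (t \ K) +
      (μ (s i) - μ t)) l (𝓝 (2 * μ (t \ K))) := by
    have hdefect := ENNReal.Tendsto.sub hvol tendsto_const_nhds (Or.inr hμt)
    simpa using ((ENNReal.Tendsto.const_mul (hloc K hK) (Or.inr ENNReal.ofNat_ne_top)).add
      tendsto_const_nhds).add hdefect
  have hlt : 2 * μ (t \ K) < ε := by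
    rwa [mul_comm, ← ENNReal.lt_div_iff_mul_lt (Or.inl two_ne_zero)
      (Or.inl ENNReal.ofNat_ne_top)]
  filter_upwards [hbound.eventually_lt_const hlt] with i hi
  calc μ (symmDiff (s i) t) ≤ 2 * μ (t \ s i) + (μ (s i) - μ t) :=
        measure_symmDiff_le_two_mul_measure_sdiff_add_tsub ht hμt
    _ ≤ 2 * (μ (symmDiff (s i) t ∩ K) + μ (t \ K)) + (μ (s i) - μ t) := by
        gcongr
        exact measure_sdiff_le_measure_symmDiff_inter_add _ _ _
    _ ≤ ε := by rw [mul_add]; exact hi.le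

end MeasureTheory

theorem global_convergence_of_local_general (d : ℕ)
    (E : ℕ → Set (EuclideanSpace ℝ (Fin d))) (Elim : Set (EuclideanSpace ℝ (Fin d)))
    (hml : MeasurableSet Elim) (hEfin : volume Elim < ⊤)
    (hloc : ∀ K : Set (EuclideanSpace ℝ (Fin d)), IsCompact K →
      Tendsto (fun n => volume (symmDiff (E n) Elim ∩ K)) atTop (𝓝 0))
    (hvol : Tendsto (fun n => volume (E n)) atTop (𝓝 (volume Elim))) :
    Tendsto (fun n => volume (symmDiff (E n) Elim)) atTop (𝓝 0) :=
  tendsto_measure_symmDiff_of_tendsto_measure_symmDiff_inter_isCompact hml hEfin.ne hloc hvol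

/-- local convergence plus convergence of measures implies global convergence. -/
theorem global_convergence_of_local (d : ℕ)
    (E : ℕ → Set (EuclideanSpace ℝ (Fin d))) (Elim : Set (EuclideanSpace ℝ (Fin d)))
    (hmeas : ∀ n, MeasurableSet (E n)) (hfp : ∀ n, FinitePerimeter d (E n))
    (hml : MeasurableSet Elim) (hEfin : volume Elim < ⊤)
    (hloc : ∀ K : Set (EuclideanSpace ℝ (Fin d)), IsCompact K →
      Tendsto (fun n => volume (symmDiff (E n) Elim ∩ K)) atTop (𝓝 0))
    (hvol : Tendsto (fun n => volume (E n)) atTop (𝓝 (volume Elim))) :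
    Tendsto (fun n => volume (symmDiff (E n) Elim)) atTop (𝓝 0) :=
  global_convergence_of_local_general d E Elim hml hEfin hloc hvol
end
end

section
/- Let 0 < λ < d and let (F_n), (G_n) be sequences of measurable sets in R^d with uniformly bounded measure and |F_n ∩ G_n| = 0 for all n. Suppose F_n → E globally and G_n → ∅ locally for some set E of finite measure. Then I_λ(F_n ∪ G_n) − I_λ(F_n) − I_λ(G_n) → 0 and I_λ(F_n) → I_λ(E), where I_λ(A) = (1/2) ∬_{A×A} |x−y|^{−λ} dx dy. -/
open MeasureTheory Filter Metric Set Topology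
open scoped ENNReal NNReal

noncomputable section

/-!
Write the energy through the interaction `J(A, B) = ∫_A ∫_B |x - y|^{-λ}` with values in
`[0, ∞]`. Since `λ < d` the singularity of the kernel is integrable, and at distance `≥ 1` the
kernel is at most `1`, so the potential `∫_B |x - y|^{-λ} dy` is at most `C + |B|` uniformly in
`x`. Consequently `J(A, A)` moves by at most a constant times `|A Δ B|`, which gives
`I_λ(F_n) → I_λ(E)`, while for a.e. disjoint `F, G` the defect
`I_λ(F ∪ G) - I_λ(F) - I_λ(G)` is exactly `J(F, G)`. To see `J(F_n, G_n) → 0`, cut `F_n` at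
radius `R` and `G_n` at radius `2R`: the near part of `G_n` and the far part of `F_n` have small
measure (`|F_n \ B_R| ≤ |E \ B_R| + |F_n Δ E|`), and the remaining pairs are at distance `≥ R`,
contributing at most `R^{-λ} M²`. Let `n → ∞`, then `R → ∞`.
-/

section Kernel

variable {E : Type*} [NormedAddCommGroup E]

def rieszKernel (l : ℝ) (x y : E) : ℝ≥0∞ := ENNReal.ofReal (‖x - y‖ ^ (-l))

lemma rieszKernel_comm (l : ℝ) (x y : E) : rieszKernel l x y = rieszKernel l y x := by
  rw [rieszKernel, rieszKernel, norm_sub_rev]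

lemma rieszKernel_le_of_le_norm_sub {l r : ℝ} {x y : E} (hl : 0 ≤ l) (hr : 0 < r)
    (h : r ≤ ‖x - y‖) : rieszKernel l x y ≤ ENNReal.ofReal (r ^ (-l)) :=
  ENNReal.ofReal_le_ofReal (Real.rpow_le_rpow_of_nonpos hr h (neg_nonpos.2 hl))

lemma rieszKernel_le_indicator_add_one {l : ℝ} (hl : 0 ≤ l) (x y : E) :
    rieszKernel l x y ≤
      (ball (0 : E) 1).indicator (fun z : E => ENNReal.ofReal (‖z‖ ^ (-l))) (x - y) + 1 := by
  by_cases hxy : x - y ∈ ball (0 : E) 1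
  · rw [indicator_of_mem hxy]
    exact le_self_add
  · rw [indicator_of_notMem hxy, zero_add]
    exact (rieszKernel_le_of_le_norm_sub hl one_pos (by simpa using hxy)).trans_eq (by simp)

variable [MeasurableSpace E] [BorelSpace E] [SecondCountableTopology E]

lemma measurable_rieszKernel (l : ℝ) : Measurable (Function.uncurry (rieszKernel (E := E) l)) :=
  ((measurable_fst.sub measurable_snd).norm.pow_const _).ennreal_ofReal

end Kernel

section Interaction

variable {E : Type*} [NormedAddCommGroup E] [MeasurableSpace E] (μ : Measure E) (l : ℝ)

def rieszInteraction (A B : Set E) : ℝ≥0∞ :=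
  ∫⁻ x in A, ∫⁻ y in B, rieszKernel l x y ∂μ ∂μ

variable {μ l} {A A₁ A₂ B B₁ B₂ : Set E}

lemma rieszInteraction_mono (hA : A₁ ⊆ A₂) (hB : B₁ ⊆ B₂) :
    rieszInteraction μ l A₁ B₁ ≤ rieszInteraction μ l A₂ B₂ :=
  (lintegral_mono fun _ => lintegral_mono_set hB).trans (lintegral_mono_set hA)

lemma rieszInteraction_le_add_of_subset_union_left (h : A ⊆ A₁ ∪ A₂) :
    rieszInteraction μ l A B ≤ rieszInteraction μ l A₁ B + rieszInteraction μ l A₂ B :=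
  (lintegral_mono_set h).trans (lintegral_union_le _ _ _)

lemma rieszInteraction_union_left (hA₂ : NullMeasurableSet A₂ μ) (h : AEDisjoint μ A₁ A₂) :
    rieszInteraction μ l (A₁ ∪ A₂) B = rieszInteraction μ l A₁ B + rieszInteraction μ l A₂ B := by
  rw [rieszInteraction, Measure.restrict_union₀ h hA₂, lintegral_add_measure]
  rfl

lemma rieszInteraction_le_mul_measure {c : ℝ≥0∞}
    (hc : ∀ x, ∫⁻ y in B, rieszKernel l x y ∂μ ≤ c) : rieszInteraction μ l A B ≤ c * μ A :=
  (lintegral_mono hc).trans (setLIntegral_const A c).le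

lemma rieszInteraction_le_of_le_norm_sub {r : ℝ} (hl : 0 ≤ l) (hr : 0 < r)
    (h : ∀ x ∈ A, ∀ y ∈ B, r ≤ ‖x - y‖) :
    rieszInteraction μ l A B ≤ ENNReal.ofReal (r ^ (-l)) * μ B * μ A := by
  have hinner : ∀ x ∈ A, ∫⁻ y in B, rieszKernel l x y ∂μ ≤ ENNReal.ofReal (r ^ (-l)) * μ B :=
    fun x hx => (setLIntegral_mono measurable_const fun y hy =>
      rieszKernel_le_of_le_norm_sub hl hr (h x hx y hy)).trans (setLIntegral_const B _).le
  exact (setLIntegral_mono measurable_const hinner).trans (setLIntegral_const A _).le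

variable [BorelSpace E] [SecondCountableTopology E] [SFinite μ]

lemma measurable_setLIntegral_rieszKernel (B : Set E) :
    Measurable fun x => ∫⁻ y in B, rieszKernel l x y ∂μ :=
  (measurable_rieszKernel l).lintegral_prod_right'

lemma rieszInteraction_comm (A B : Set E) :
    rieszInteraction μ l A B = rieszInteraction μ l B A := by
  rw [rieszInteraction, lintegral_lintegral_swap (measurable_rieszKernel l).aemeasurable]
  simp only [rieszInteraction, rieszKernel_comm l _ _]

lemma rieszInteraction_union_right (hB₂ : NullMeasurableSet B₂ μ) (h : AEDisjoint μ B₁ B₂) :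
    rieszInteraction μ l A (B₁ ∪ B₂) = rieszInteraction μ l A B₁ + rieszInteraction μ l A B₂ := by
  rw [rieszInteraction_comm, rieszInteraction_union_left hB₂ h, rieszInteraction_comm B₁,
    rieszInteraction_comm B₂]

lemma rieszInteraction_le_add_of_subset_union_right (h : B ⊆ B₁ ∪ B₂) :
    rieszInteraction μ l A B ≤ rieszInteraction μ l A B₁ + rieszInteraction μ l A B₂ := by
  simpa only [rieszInteraction_comm A] using rieszInteraction_le_add_of_subset_union_left h

lemma rieszInteraction_self_le_add {c : ℝ≥0∞} (hA : MeasurableSet A) (hB : MeasurableSet B)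
    (hc : ∀ x, ∫⁻ y in A ∪ B, rieszKernel l x y ∂μ ≤ c) :
    rieszInteraction μ l A A ≤ rieszInteraction μ l B B + 2 * (c * μ (A \ B)) := by
  have hD : NullMeasurableSet (A \ B) μ := (hA.diff hB).nullMeasurableSet
  have hBD : AEDisjoint μ B (A \ B) := disjoint_sdiff_right.aedisjoint
  have hS : A ∪ B = B ∪ (A \ B) := by rw [union_sdiff_self, union_comm]
  have hcross : rieszInteraction μ l (A \ B) (A ∪ B) ≤ c * μ (A \ B) :=
    rieszInteraction_le_mul_measure hc
  calc rieszInteraction μ l A A ≤ rieszInteraction μ l (A ∪ B) (A ∪ B) :=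
        rieszInteraction_mono subset_union_left subset_union_left
    _ = rieszInteraction μ l B B + rieszInteraction μ l (A \ B) B
          + rieszInteraction μ l (A \ B) (A ∪ B) := by
        nth_rw 1 [hS]
        rw [rieszInteraction_union_left hD hBD, hS, rieszInteraction_union_right hD hBD,
          rieszInteraction_comm B (A \ B), ← hS]
    _ ≤ rieszInteraction μ l B B + c * μ (A \ B) + c * μ (A \ B) := by
        gcongr
        exact (rieszInteraction_mono subset_rfl subset_union_right).trans hcross
    _ = rieszInteraction μ l B B + 2 * (c * μ (A \ B)) := by ring

lemma rieszInteraction_le_of_closedBall (hl : 0 ≤ l) {R : ℝ} (hR : 0 < R)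
    {c : ℝ≥0∞} (hcA : ∀ x, ∫⁻ y in A, rieszKernel l x y ∂μ ≤ c)
    (hcB : ∀ x, ∫⁻ y in B, rieszKernel l x y ∂μ ≤ c) :
    rieszInteraction μ l A B ≤ c * μ (B ∩ closedBall 0 (2 * R))
      + ENNReal.ofReal (R ^ (-l)) * μ B * μ A + c * μ (A \ closedBall 0 R) := by
  set K₁ := closedBall (0 : E) R
  set K₂ := closedBall (0 : E) (2 * R)
  have hfar : ∀ x ∈ A ∩ K₁, ∀ y ∈ B \ K₂, R ≤ ‖x - y‖ := by
    rintro x ⟨-, hx⟩ y ⟨-, hy⟩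
    rw [mem_closedBall_zero_iff] at hx
    rw [mem_closedBall_zero_iff, not_le] at hy
    linarith [norm_sub_norm_le y x, norm_sub_rev x y]
  calc rieszInteraction μ l A B
      ≤ rieszInteraction μ l A (B ∩ K₂) + (rieszInteraction μ l (A ∩ K₁) (B \ K₂)
          + rieszInteraction μ l (A \ K₁) (B \ K₂)) := by
        refine (rieszInteraction_le_add_of_subset_union_right (inter_union_sdiff B K₂).ge).trans ?_
        gcongr
        exact rieszInteraction_le_add_of_subset_union_left (inter_union_sdiff A K₁).ge
    _ ≤ c * μ (B ∩ K₂) + (ENNReal.ofReal (R ^ (-l)) * μ (B \ K₂) * μ (A ∩ K₁)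
          + c * μ (A \ K₁)) := by
        gcongr
        · rw [rieszInteraction_comm]
          exact rieszInteraction_le_mul_measure hcA
        · exact rieszInteraction_le_of_le_norm_sub hl hR hfar
        · exact rieszInteraction_le_mul_measure fun x =>
            (lintegral_mono_set sdiff_subset).trans (hcB x)
    _ ≤ _ := by
        rw [← add_assoc]
        gcongr
        · exact sdiff_subset
        · exact inter_subset_left

end Interaction

lemma tendsto_measure_diff_closedBall_atTop {X : Type*} [PseudoMetricSpace X] [MeasurableSpace X]
    [OpensMeasurableSpace X] {μ : Measure X} {s : Set X} (hs : μ s ≠ ⊤) (x : X) :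
    Tendsto (fun R : ℝ => μ (s \ closedBall x R)) atTop (𝓝 0) := by
  have hlim := tendsto_measure_iInter_atTop (μ := μ.restrict s)
    (s := fun R : ℝ => (closedBall x R)ᶜ)
    (fun R => measurableSet_closedBall.compl.nullMeasurableSet)
    (fun R R' hRR' => compl_subset_compl.2 (closedBall_subset_closedBall hRR'))
    ⟨0, ne_top_of_le_ne_top (by rwa [Measure.restrict_apply_univ]) (measure_mono (subset_univ _))⟩
  rw [iInter_eq_empty_iff.2 fun y => ⟨dist y x, by simp⟩, measure_empty] at hlim
  refine hlim.congr fun R => ?_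
  rw [Function.comp_apply, Measure.restrict_apply measurableSet_closedBall.compl, inter_comm,
    ← sdiff_eq]

section Haar

variable {E : Type*} [NormedAddCommGroup E] [NormedSpace ℝ E] [FiniteDimensional ℝ E]
  [MeasurableSpace E] [BorelSpace E] (μ : Measure E) [μ.IsAddHaarMeasure] {l : ℝ}

lemma lintegral_ball_rpow_neg_lt_top (hl : 0 < l) (hld : l < Module.finrank ℝ E) :
    ∫⁻ z in ball (0 : E) 1, ENNReal.ofReal (‖z‖ ^ (-l)) ∂μ < ⊤ := by
  have hdim : 1 ≤ Module.finrank ℝ E := by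
    exact_mod_cast (show (0 : ℝ) < Module.finrank ℝ E by linarith)
  refine Integrable.lintegral_lt_top (integrableOn_ball_of_norm_le_rpow (C := 1) hdim hld
    (ae_of_all _ fun z => ?_) (measurable_norm.pow_const _).aestronglyMeasurable)
  rw [one_mul, Real.norm_of_nonneg (by positivity)]

lemma setLIntegral_rieszKernel_le (hl : 0 ≤ l) (x : E) (B : Set E) :
    ∫⁻ y in B, rieszKernel l x y ∂μ ≤
      (∫⁻ z in ball (0 : E) 1, ENNReal.ofReal (‖z‖ ^ (-l)) ∂μ) + μ B := by
  calc ∫⁻ y in B, rieszKernel l x y ∂μ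
      ≤ ∫⁻ y in B, (ball (0 : E) 1).indicator (fun z : E => ENNReal.ofReal (‖z‖ ^ (-l))) (x - y)
          + 1 ∂μ := lintegral_mono fun y => rieszKernel_le_indicator_add_one hl x y
    _ ≤ (∫⁻ y, (ball (0 : E) 1).indicator (fun z : E => ENNReal.ofReal (‖z‖ ^ (-l))) (x - y) ∂μ)
          + μ B := by
        rw [lintegral_add_right _ measurable_const, setLIntegral_const, one_mul]
        gcongr
        exact Measure.restrict_le_self
    _ = (∫⁻ z in ball (0 : E) 1, ENNReal.ofReal (‖z‖ ^ (-l)) ∂μ) + μ B := by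
        rw [lintegral_sub_left_eq_self, lintegral_indicator measurableSet_ball]

lemma exists_setLIntegral_rieszKernel_le (hl : 0 < l) (hld : l < Module.finrank ℝ E) :
    ∃ C < ⊤, ∀ (x : E) (B : Set E), ∫⁻ y in B, rieszKernel l x y ∂μ ≤ C + μ B :=
  ⟨_, lintegral_ball_rpow_neg_lt_top μ hl hld, setLIntegral_rieszKernel_le μ hl.le⟩

lemma rieszInteraction_lt_top (hl : 0 < l) (hld : l < Module.finrank ℝ E) {A B : Set E}
    (hA : μ A ≠ ⊤) (hB : μ B ≠ ⊤) : rieszInteraction μ l A B < ⊤ := by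
  obtain ⟨C, hC, hpot⟩ := exists_setLIntegral_rieszKernel_le μ hl hld
  exact (rieszInteraction_le_mul_measure (hpot · B)).trans_lt
    (ENNReal.mul_lt_top (ENNReal.add_lt_top.2 ⟨hC, hB.lt_top⟩) hA.lt_top)

theorem tendsto_rieszInteraction_atTop_nhds_zero (hl : 0 < l) (hld : l < Module.finrank ℝ E)
    {F G : ℕ → Set E} {S : Set E} {M : ℝ≥0∞} (hS : μ S ≠ ⊤) (hM : M ≠ ⊤)
    (hFM : ∀ n, μ (F n) ≤ M) (hGM : ∀ n, μ (G n) ≤ M)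
    (hFS : Tendsto (fun n => μ (symmDiff (F n) S)) atTop (𝓝 0))
    (hG : ∀ K, IsCompact K → Tendsto (fun n => μ (G n ∩ K)) atTop (𝓝 0)) :
    Tendsto (fun n => rieszInteraction μ l (F n) (G n)) atTop (𝓝 0) := by
  obtain ⟨C, hC, hpot⟩ := exists_setLIntegral_rieszKernel_le μ hl hld
  set c := C + M
  have hc : c ≠ ⊤ := ENNReal.add_ne_top.2 ⟨hC.ne, hM⟩
  have hpotF : ∀ n x, ∫⁻ y in F n, rieszKernel l x y ∂μ ≤ c := fun n x =>
    (hpot x _).trans (add_le_add le_rfl (hFM n))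
  have hpotG : ∀ n x, ∫⁻ y in G n, rieszKernel l x y ∂μ ≤ c := fun n x =>
    (hpot x _).trans (add_le_add le_rfl (hGM n))
  have hFK : ∀ n R, μ (F n \ closedBall 0 R) ≤ μ (S \ closedBall 0 R) + μ (symmDiff (F n) S) :=
    fun n R => (measure_mono fun x hx => by by_cases x ∈ S <;> simp_all [symmDiff_def]).trans
      (measure_union_le _ _)
  have hRlim : Tendsto (fun R : ℝ => ENNReal.ofReal (R ^ (-l)) * M * M
      + c * μ (S \ closedBall 0 R)) atTop (𝓝 0) := by
    have hpow : Tendsto (fun R : ℝ => ENNReal.ofReal (R ^ (-l))) atTop (𝓝 0) := by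
      simpa using ENNReal.tendsto_ofReal (tendsto_rpow_neg_atTop hl)
    simpa using (ENNReal.Tendsto.mul_const (ENNReal.Tendsto.mul_const hpow (Or.inr hM))
      (Or.inr hM)).add
        (ENNReal.Tendsto.const_mul (tendsto_measure_diff_closedBall_atTop hS 0) (Or.inr hc))
  rw [ENNReal.tendsto_nhds_zero]
  intro ε hε
  obtain ⟨R, hRε, hR⟩ := ((hRlim.eventually (gt_mem_nhds hε)).and (eventually_gt_atTop 0)).exists
  have hnlim : Tendsto (fun n => c * μ (G n ∩ closedBall 0 (2 * R))
      + ENNReal.ofReal (R ^ (-l)) * M * M + c * (μ (S \ closedBall 0 R) + μ (symmDiff (F n) S)))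
      atTop (𝓝 (ENNReal.ofReal (R ^ (-l)) * M * M + c * μ (S \ closedBall 0 R))) := by
    simpa using ((ENNReal.Tendsto.const_mul (hG _ (isCompact_closedBall _ _)) (Or.inr hc)).add
      tendsto_const_nhds).add (ENNReal.Tendsto.const_mul (tendsto_const_nhds.add hFS) (Or.inr hc))
  filter_upwards [hnlim.eventually (gt_mem_nhds hRε)] with n hn
  calc rieszInteraction μ l (F n) (G n)
      ≤ c * μ (G n ∩ closedBall 0 (2 * R)) + ENNReal.ofReal (R ^ (-l)) * μ (G n) * μ (F n)
        + c * μ (F n \ closedBall 0 R) :=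
        rieszInteraction_le_of_closedBall (by positivity) hR (hpotF n) (hpotG n)
    _ ≤ _ := by gcongr; exacts [hGM n, hFM n, hFK n R]
    _ ≤ ε := hn.le

end Haar

lemma ENNReal.abs_toReal_sub_toReal_le {a b t : ℝ≥0∞} (ha : a ≠ ⊤) (hb : b ≠ ⊤) (ht : t ≠ ⊤)
    (hab : a ≤ b + t) (hba : b ≤ a + t) : |a.toReal - b.toReal| ≤ t.toReal := by
  have h₁ := ENNReal.toReal_mono (ENNReal.add_ne_top.2 ⟨hb, ht⟩) hab
  have h₂ := ENNReal.toReal_mono (ENNReal.add_ne_top.2 ⟨ha, ht⟩) hba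
  rw [ENNReal.toReal_add hb ht] at h₁
  rw [ENNReal.toReal_add ha ht] at h₂
  exact abs_sub_le_iff.2 ⟨by linarith, by linarith⟩

section Energy

variable {d : ℕ} {l : ℝ} {A B : Set (EuclideanSpace ℝ (Fin d))}

lemma riesz_eq_toReal_rieszInteraction (h : rieszInteraction volume l A A ≠ ⊤) :
    riesz d l A = (rieszInteraction volume l A A).toReal / 2 := by
  have hinner : ∀ x : EuclideanSpace ℝ (Fin d),
      ∫ y in A, ‖x - y‖ ^ (-l) = (∫⁻ y in A, rieszKernel l x y).toReal := fun x =>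
    integral_eq_lintegral_of_nonneg_ae (ae_of_all _ fun y => by positivity)
      ((measurable_const.sub measurable_id).norm.pow_const _).aestronglyMeasurable
  have hmeas := measurable_setLIntegral_rieszKernel (μ := volume) (l := l) A
  -- `h` makes the inner integrals finite a.e., so the outer Bochner integral is not a junk value
  rw [riesz, funext hinner, integral_toReal hmeas.aemeasurable (ae_lt_top hmeas h),
    ← rieszInteraction]
  ring

lemma riesz_union_sub_riesz_sub_riesz (hB : MeasurableSet B) (hAB : volume (A ∩ B) = 0)
    (h : rieszInteraction volume l (A ∪ B) (A ∪ B) ≠ ⊤) :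
    riesz d l (A ∪ B) - riesz d l A - riesz d l B = (rieszInteraction volume l A B).toReal := by
  have hsplit : rieszInteraction volume l (A ∪ B) (A ∪ B) = rieszInteraction volume l A A
      + rieszInteraction volume l A B + (rieszInteraction volume l A B
      + rieszInteraction volume l B B) := by
    rw [rieszInteraction_union_left hB.nullMeasurableSet hAB,
      rieszInteraction_union_right hB.nullMeasurableSet hAB,
      rieszInteraction_union_right hB.nullMeasurableSet hAB, rieszInteraction_comm B A]
  have hfin : ∀ {X Y}, X ⊆ A ∪ B → Y ⊆ A ∪ B → rieszInteraction volume l X Y ≠ ⊤ :=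
    fun hX hY => ne_top_of_le_ne_top h (rieszInteraction_mono hX hY)
  have hAA := hfin subset_union_left subset_union_left
  have hAB' := hfin subset_union_left subset_union_right
  have hBB := hfin subset_union_right subset_union_right
  rw [riesz_eq_toReal_rieszInteraction h, riesz_eq_toReal_rieszInteraction hAA,
    riesz_eq_toReal_rieszInteraction hBB, hsplit, ENNReal.toReal_add (by finiteness)
    (by finiteness), ENNReal.toReal_add hAA hAB', ENNReal.toReal_add hAB' hBB]
  ring

lemma abs_riesz_sub_riesz_le (hA : MeasurableSet A) (hB : MeasurableSet B)
    (hAB : volume (A ∪ B) ≠ ⊤) {c : ℝ≥0∞} (hc : c ≠ ⊤)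
    (hpot : ∀ x, ∫⁻ y in A ∪ B, rieszKernel l x y ≤ c) :
    |riesz d l A - riesz d l B| ≤ c.toReal * (volume (symmDiff A B)).toReal := by
  have hfin : ∀ {X}, X ⊆ A ∪ B → rieszInteraction volume l X X ≠ ⊤ := fun hX =>
    ne_top_of_le_ne_top (ENNReal.mul_ne_top hc hAB)
      ((rieszInteraction_le_mul_measure fun x => (lintegral_mono_set hX).trans (hpot x)).trans
        (by gcongr))
  have hΔ : volume (symmDiff A B) ≠ ⊤ :=
    ne_top_of_le_ne_top hAB (measure_mono symmDiff_subset_union)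
  have hAB' : rieszInteraction volume l A A ≤
      rieszInteraction volume l B B + 2 * (c * volume (symmDiff A B)) :=
    (rieszInteraction_self_le_add hA hB hpot).trans (by gcongr; exact subset_union_left)
  have hBA' : rieszInteraction volume l B B ≤
      rieszInteraction volume l A A + 2 * (c * volume (symmDiff A B)) :=
    (rieszInteraction_self_le_add hB hA (union_comm A B ▸ hpot)).trans
      (by gcongr; exact subset_union_right)
  have key := ENNReal.abs_toReal_sub_toReal_le (hfin subset_union_left)
    (hfin subset_union_right) (by finiteness) hAB' hBA'
  rw [riesz_eq_toReal_rieszInteraction (hfin subset_union_left),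
    riesz_eq_toReal_rieszInteraction (hfin subset_union_right), ← sub_div, abs_div,
    abs_two, div_le_iff₀ two_pos]
  simpa [ENNReal.toReal_mul, mul_comm, mul_left_comm, mul_assoc] using key

end Energy

theorem riesz_energy_splitting_general (d : ℕ) (l : ℝ) (hl : 0 < l) (hld : l < d)
    (F G : ℕ → Set (EuclideanSpace ℝ (Fin d))) (Elim : Set (EuclideanSpace ℝ (Fin d)))
    (hFm : ∀ n, MeasurableSet (F n)) (hGm : ∀ n, MeasurableSet (G n))
    (hEm : MeasurableSet Elim) (hEfin : volume Elim < ⊤)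
    (M : ℝ≥0∞) (hM : M < ⊤) (hbd : ∀ n, volume (F n) + volume (G n) ≤ M)
    (hdisj : ∀ n, volume (F n ∩ G n) = 0)
    (hFconv : Tendsto (fun n => volume (symmDiff (F n) Elim)) atTop (𝓝 0))
    (hGconv : ∀ K : Set (EuclideanSpace ℝ (Fin d)), IsCompact K →
      Tendsto (fun n => volume (G n ∩ K)) atTop (𝓝 0)) :
    Tendsto (fun n => riesz d l (F n ∪ G n) - riesz d l (F n) - riesz d l (G n))
        atTop (𝓝 0) ∧
      Tendsto (fun n => riesz d l (F n)) atTop (𝓝 (riesz d l Elim)) := by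
  have hdim : l < Module.finrank ℝ (EuclideanSpace ℝ (Fin d)) := by
    rwa [finrank_euclideanSpace_fin]
  have hFM n : volume (F n) ≤ M := le_self_add.trans (hbd n)
  have hGM n : volume (G n) ≤ M := le_add_self.trans (hbd n)
  have hFGM n : volume (F n ∪ G n) ≤ M := (measure_union_le _ _).trans (hbd n)
  constructor
  · have hcross n : riesz d l (F n ∪ G n) - riesz d l (F n) - riesz d l (G n) =
        (rieszInteraction volume l (F n) (G n)).toReal :=
      riesz_union_sub_riesz_sub_riesz (hGm n) (hdisj n)
        (rieszInteraction_lt_top volume hl hdim (hFGM n |>.trans_lt hM).ne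
          (hFGM n |>.trans_lt hM).ne).ne
    simpa only [hcross, ENNReal.toReal_zero, Function.comp_def] using
      (ENNReal.tendsto_toReal ENNReal.zero_ne_top).comp
        (tendsto_rieszInteraction_atTop_nhds_zero volume hl hdim hEfin.ne hM.ne hFM hGM hFconv
          hGconv)
  · obtain ⟨C, hC, hpot⟩ := exists_setLIntegral_rieszKernel_le volume hl hdim
    have hFE n : volume (F n ∪ Elim) ≤ M + volume Elim :=
      (measure_union_le _ _).trans (add_le_add (hFM n) le_rfl)
    have hbound n := abs_riesz_sub_riesz_le (hFm n) hEm
      (ne_top_of_le_ne_top (by finiteness) (hFE n)) (by finiteness)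
      fun x => (hpot x _).trans (add_le_add le_rfl (hFE n))
    have hlim : Tendsto (fun n => (C + (M + volume Elim)).toReal *
        (volume (symmDiff (F n) Elim)).toReal) atTop (𝓝 0) := by
      simpa using ((ENNReal.tendsto_toReal ENNReal.zero_ne_top).comp hFconv).const_mul
        (C + (M + volume Elim)).toReal
    exact tendsto_iff_norm_sub_tendsto_zero.2 (squeeze_zero (fun _ => norm_nonneg _) hbound hlim)

/-- asymptotic additivity of the Riesz energy along the dichotomy. -/
theorem riesz_energy_splitting (d : ℕ) (hd : 0 < d) (l : ℝ) (hl : 0 < l) (hld : l < d)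
    (F G : ℕ → Set (EuclideanSpace ℝ (Fin d))) (Elim : Set (EuclideanSpace ℝ (Fin d)))
    (hFm : ∀ n, MeasurableSet (F n)) (hGm : ∀ n, MeasurableSet (G n))
    (hEm : MeasurableSet Elim) (hEfin : volume Elim < ⊤)
    (M : ℝ≥0∞) (hM : M < ⊤) (hbd : ∀ n, volume (F n) + volume (G n) ≤ M)
    (hdisj : ∀ n, volume (F n ∩ G n) = 0)
    (hFconv : Tendsto (fun n => volume (symmDiff (F n) Elim)) atTop (𝓝 0))
    (hGconv : ∀ K : Set (EuclideanSpace ℝ (Fin d)), IsCompact K →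
      Tendsto (fun n => volume (G n ∩ K)) atTop (𝓝 0)) :
    Tendsto (fun n => riesz d l (F n ∪ G n) - riesz d l (F n) - riesz d l (G n))
        atTop (𝓝 0) ∧
      Tendsto (fun n => riesz d l (F n)) atTop (𝓝 (riesz d l Elim)) :=
  riesz_energy_splitting_general d l hl hld F G Elim hFm hGm hEm hEfin M hM hbd hdisj hFconv hGconv
end
end

section
/- Suppose A_0 > 0 is a local minimum of A ↦ E(A)/A and E(A_0) is attained by a set Ω_0 with |Ω_0| = A_0, where E(A) = inf{Per(Ω) + D(Ω) : |Ω| = A}. Then the virial relation Per(Ω_0) = 2 D(Ω_0) holds. -/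
open MeasureTheory Filter Metric Set Topology

noncomputable section

/-! Dilating `Ω0` by `t > 0` gives a competitor of mass `t³ A0` whose perimeter is `t² Per(Ω0)`
and whose Coulomb energy is `t⁵ D(Ω0)`. Local minimality of `E(A)/A` at `A0`, together with
`E(A0) = Per(Ω0) + D(Ω0)`, therefore makes `t ↦ t⁻¹ Per(Ω0) + t² D(Ω0)` locally minimal at
`t = 1`, and its derivative `2 D(Ω0) - Per(Ω0)` there must vanish. -/

open scoped Pointwise

section Dilation

variable {d : ℕ} {c : ℝ}

lemma setIntegral_smul_set (hc : 0 < c) (s : Set (EuclideanSpace ℝ (Fin d)))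
    (f : EuclideanSpace ℝ (Fin d) → ℝ) :
    ∫ x in c • s, f x = c ^ d * ∫ x in s, f (c • x) := by
  rw [Measure.setIntegral_comp_smul_of_pos volume f s hc, finrank_euclideanSpace_fin,
    smul_eq_mul, mul_inv_cancel_left₀ (by positivity)]

lemma volume_smul_of_eq_ofReal (hc : 0 < c) {s : Set (EuclideanSpace ℝ (Fin d))} {A : ℝ}
    (hs : volume s = ENNReal.ofReal A) : volume (c • s) = ENNReal.ofReal (c ^ d * A) := by
  rw [Measure.addHaar_smul_of_nonneg volume hc.le, finrank_euclideanSpace_fin, hs,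
    ← ENNReal.ofReal_mul (by positivity)]

lemma zpow_mul_mem_perSet_of_mem_perSet_smul (hc : 0 < c) {E : Set (EuclideanSpace ℝ (Fin d))}
    {p : ℝ} (hp : p ∈ perSet d (c • E)) : c ^ (1 - (d : ℤ)) * p ∈ perSet d E := by
  obtain ⟨F, hF, hFc, hFn, rfl⟩ := hp
  refine ⟨fun x => F (c • x), hF.comp (contDiff_id.const_smul c), hFc.comp_smul hc.ne',
    fun x => hFn _, ?_⟩
  have hdiv : ∀ x, ∑ i, fderiv ℝ (fun x => F (c • x)) x (EuclideanSpace.single i (1:ℝ)) i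
      = c * ∑ i, fderiv ℝ F (c • x) (EuclideanSpace.single i (1:ℝ)) i := by
    intro x
    simp [fderiv_comp_smul, Finset.mul_sum]
  simp_rw [hdiv, integral_const_mul, setIntegral_smul_set hc, ← mul_assoc]
  congr 1
  rw [zpow_sub₀ hc.ne', zpow_one, zpow_natCast]
  field_simp

lemma perSet_smul (hc : 0 < c) (E : Set (EuclideanSpace ℝ (Fin d))) :
    perSet d (c • E) = c ^ ((d : ℤ) - 1) • perSet d E := by
  ext p
  constructor
  · intro hp
    refine ⟨_, zpow_mul_mem_perSet_of_mem_perSet_smul hc hp, ?_⟩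
    change c ^ ((d : ℤ) - 1) * (c ^ (1 - (d : ℤ)) * p) = p
    rw [← mul_assoc, ← zpow_add₀ hc.ne']
    simp
  · rintro ⟨q, hq, rfl⟩
    rw [← inv_smul_smul₀ hc.ne' E] at hq
    have := zpow_mul_mem_perSet_of_mem_perSet_smul (inv_pos.2 hc) hq
    rwa [inv_zpow', neg_sub] at this

lemma perimeter_smul (hc : 0 < c) (E : Set (EuclideanSpace ℝ (Fin d))) :
    perimeter d (c • E) = c ^ ((d : ℤ) - 1) * perimeter d E := by
  rw [perimeter, perSet_smul hc, Real.sSup_smul_of_nonneg (by positivity), smul_eq_mul,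
    perimeter]

lemma FinitePerimeter.smul (hc : 0 < c) {E : Set (EuclideanSpace ℝ (Fin d))}
    (h : FinitePerimeter d E) : FinitePerimeter d (c • E) := by
  rw [FinitePerimeter, perSet_smul hc]
  exact h.smul_of_nonneg (by positivity)

lemma coulomb_smul (hc : 0 < c) (Ω : Set E3) : coulomb (c • Ω) = c ^ 5 * coulomb Ω := by
  have inner : ∀ x : E3, ∫ y in c • Ω, ‖c • x - y‖⁻¹ = c ^ 2 * ∫ y in Ω, ‖x - y‖⁻¹ := by
    intro x
    have hnorm : ∀ y : E3, ‖c • x - c • y‖⁻¹ = c⁻¹ * ‖x - y‖⁻¹ := fun y => by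
      rw [← smul_sub, norm_smul, Real.norm_of_nonneg hc.le, mul_inv]
    rw [setIntegral_smul_set hc]
    simp_rw [hnorm, integral_const_mul]
    field_simp
  rw [coulomb, coulomb, setIntegral_smul_set hc]
  simp_rw [inner, integral_const_mul]
  ring

lemma ldEnergy_smul (hc : 0 < c) (Ω : Set E3) :
    ldEnergy (c • Ω) = c ^ 2 * perimeter 3 Ω + c ^ 5 * coulomb Ω := by
  rw [ldEnergy, perimeter_smul hc, coulomb_smul hc]
  norm_num

end Dilation

lemma perimeter_nonneg {d : ℕ} {E : Set (EuclideanSpace ℝ (Fin d))} (h : FinitePerimeter d E) :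
    0 ≤ perimeter d E := by
  exact le_csSup h ⟨0, contDiff_const, HasCompactSupport.zero, fun _ => by simp, by simp⟩

lemma coulomb_nonneg (Ω : Set E3) : 0 ≤ coulomb Ω :=
  mul_nonneg (by norm_num) <| integral_nonneg fun _ => integral_nonneg fun _ => by positivity

lemma ldE_le_ldEnergy {A : ℝ} {Ω : Set E3} (hm : MeasurableSet Ω) (hfp : FinitePerimeter 3 Ω)
    (hvol : volume Ω = ENNReal.ofReal A) : ldE A ≤ ldEnergy Ω := by
  refine csInf_le ⟨0, ?_⟩ ⟨Ω, hm, hfp, hvol, rfl⟩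
  rintro _ ⟨Ω', -, hfp', -, rfl⟩
  exact add_nonneg (perimeter_nonneg hfp') (coulomb_nonneg Ω')

lemma eq_two_mul_of_isLocalMin_inv_add_sq {P D : ℝ}
    (h : IsLocalMin (fun t : ℝ => t⁻¹ * P + t ^ 2 * D) 1) : P = 2 * D := by
  have hderiv : HasDerivAt (fun t : ℝ => t⁻¹ * P + t ^ 2 * D) (-1 * P + 2 * D) 1 := by
    have hinv : HasDerivAt (fun t : ℝ => t⁻¹) (-1) 1 := by
      simpa using hasDerivAt_inv (one_ne_zero : (1:ℝ) ≠ 0)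
    have hsq : HasDerivAt (fun t : ℝ => t ^ 2) 2 1 := by simpa using hasDerivAt_pow 2 (1:ℝ)
    exact (hinv.mul_const P).add (hsq.mul_const D)
  linarith [h.hasDerivAt_eq_zero hderiv]

/-- the virial relation at a local minimum of the energy per particle. -/
theorem virial (A0 : ℝ) (hA0 : 0 < A0) (Ω0 : Set E3)
    (hm : MeasurableSet Ω0) (hfp : FinitePerimeter 3 Ω0)
    (hvol : volume Ω0 = ENNReal.ofReal A0) (hmin : ldEnergy Ω0 = ldE A0)
    (hloc : ∃ ε : ℝ, 0 < ε ∧ ∀ A : ℝ, 0 < A → |A - A0| < ε →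
      ldE A0 / A0 ≤ ldE A / A) :
    perimeter 3 Ω0 = 2 * coulomb Ω0 := by
  obtain ⟨ε, hε, hloc⟩ := hloc
  apply eq_two_mul_of_isLocalMin_inv_add_sq
  have hnear : ∀ᶠ t in 𝓝 (1:ℝ), 0 < t ∧ |t ^ 3 * A0 - A0| < ε := by
    refine (eventually_gt_nhds one_pos).and ?_
    have : ContinuousAt (fun t : ℝ => |t ^ 3 * A0 - A0|) 1 := by fun_prop
    exact this.eventually (gt_mem_nhds (by simpa using hε))
  filter_upwards [hnear] with t ⟨ht, htε⟩
  rw [inv_one, one_pow, one_mul, one_mul, ← div_le_div_iff_of_pos_right hA0]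
  calc (perimeter 3 Ω0 + coulomb Ω0) / A0 = ldE A0 / A0 := by rw [← hmin, ldEnergy]
    _ ≤ ldE (t ^ 3 * A0) / (t ^ 3 * A0) := hloc _ (by positivity) htε
    _ ≤ ldEnergy (t • Ω0) / (t ^ 3 * A0) := by
      gcongr
      exact ldE_le_ldEnergy (hm.const_smul₀ t) (hfp.smul ht) (volume_smul_of_eq_ofReal ht hvol)
    _ = (t⁻¹ * perimeter 3 Ω0 + t ^ 2 * coulomb Ω0) / A0 := by
      rw [ldEnergy_smul ht]
      field_simp
end
end

section
/- Let λ > 0 and define f(θ) = θ^{2/3} + (1−θ)^{2/3} + λ(θ^{5/3} + (1−θ)^{5/3}) for θ ∈ [0,1]. Then f(θ) ≥ min{f(0), f(1/2), f(1)} for all θ ∈ [0,1], with strict inequality unless θ ∈ {0, 1/2, 1}. -/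
/-!
With `u = θ^{1/3}` and `v = (1 - θ)^{1/3}` one has `u³ + v³ = 1` and `f θ = A + λ B` for
`A = u² + v²`, `B = u⁵ + v⁵`. The endpoints `θ = 0, 1` give `(A, B) = (1, 1)`, the midpoint gives
`(∛2, ∛2 / 2)`. For `θ ∉ {0, 1/2, 1}` the point `(A, B)` has `1 ≤ A ≤ ∛2` and lies strictly above
the chord joining these two points, so the linear form `X + λ Y` is larger there than at one of its
ends. The chord inequality is a polynomial inequality in `s = u + v ∈ (1, ∛4)`, which factors as
`(s - 1)² (∛4 - s)` times a positive cubic.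
-/

open MeasureTheory Filter Metric Set Topology

noncomputable section

/-- At `(x, y)` the form `X + t Y` exceeds the convex combination of its values at the two ends
of the chord by `t` times the height of `(x, y)` above the chord. -/
theorem min_lt_add_mul_of_above_chord {x₀ y₀ x₁ y₁ x y t : ℝ} (ht : 0 < t)
    (hx₀ : x₀ ≤ x) (hx₁ : x ≤ x₁)
    (habove : 0 < (y₀ - y₁) * (x - x₀) + (x₁ - x₀) * (y - y₀)) :
    min (x₀ + t * y₀) (x₁ + t * y₁) < x + t * y := by
  have hlt : x₀ < x₁ := by
    by_contra! h
    obtain rfl : x = x₀ := by linarith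
    obtain rfl : x₁ = x := by linarith
    simp at habove
  have hcomb : (x₁ - x₀) * (x + t * y) = (x₁ - x) * (x₀ + t * y₀) + (x - x₀) * (x₁ + t * y₁) +
      t * ((y₀ - y₁) * (x - x₀) + (x₁ - x₀) * (y - y₀)) := by ring
  have h₀ := mul_le_mul_of_nonneg_left (min_le_left (x₀ + t * y₀) (x₁ + t * y₁)) (sub_nonneg.2 hx₁)
  have h₁ := mul_le_mul_of_nonneg_left (min_le_right (x₀ + t * y₀) (x₁ + t * y₁)) (sub_nonneg.2 hx₀)
  have hexcess := mul_pos ht habove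
  nlinarith

theorem sq_add_sq_pow_three_le {u v : ℝ} (hu : 0 ≤ u) (hv : 0 ≤ v) :
    (u ^ 2 + v ^ 2) ^ 3 ≤ 2 * (u ^ 3 + v ^ 3) ^ 2 := by
  nlinarith [mul_nonneg (sq_nonneg (u - v))
    (show 0 ≤ u ^ 4 + 2 * u ^ 3 * v + 2 * u * v ^ 3 + v ^ 4 by positivity)]

section CubeSumOne

variable {u v : ℝ}

theorem one_le_sq_add_sq_of_cube_add_cube_eq_one (hu : 0 ≤ u) (hv : 0 ≤ v)
    (huv : u ^ 3 + v ^ 3 = 1) : 1 ≤ u ^ 2 + v ^ 2 := by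
  have hu1 : u ≤ 1 := by nlinarith [pow_nonneg hv 3, sq_nonneg (u - 1), sq_nonneg u]
  have hv1 : v ≤ 1 := by nlinarith [pow_nonneg hu 3, sq_nonneg (v - 1), sq_nonneg v]
  nlinarith [mul_nonneg (sq_nonneg u) (sub_nonneg.2 hu1), mul_nonneg (sq_nonneg v) (sub_nonneg.2 hv1)]

theorem one_lt_add_of_cube_add_cube_eq_one (hu : 0 < u) (hv : 0 < v)
    (huv : u ^ 3 + v ^ 3 = 1) : 1 < u + v := by
  have hcube : (1 : ℝ) ^ 3 < (u + v) ^ 3 := by nlinarith [mul_pos (mul_pos hu hv) (add_pos hu hv)]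
  exact lt_of_pow_lt_pow_left₀ 3 (by positivity) hcube

theorem add_pow_three_lt_four_of_cube_add_cube_eq_one (hu : 0 < u) (hv : 0 < v) (hne : u ≠ v)
    (huv : u ^ 3 + v ^ 3 = 1) : (u + v) ^ 3 < 4 := by
  have hgap : 1 - u * v * (u + v) = (u - v) ^ 2 * (u + v) := by linear_combination -huv
  have hpos : 0 < (u - v) ^ 2 * (u + v) := by
    have := sub_ne_zero.2 hne
    positivity
  nlinarith

end CubeSumOne

section CubeRootTwo

variable {c : ℝ}

theorem one_lt_of_pow_three_eq_two (hc : c ^ 3 = 2) : 1 < c := by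
  nlinarith [sq_nonneg (c - 1), sq_nonneg (c + 1)]

theorem lt_two_of_pow_three_eq_two (hc : c ^ 3 = 2) : c < 2 := by
  nlinarith [sq_nonneg (c - 2), sq_nonneg (c + 2)]

/-- `(2 - c) X + 2 (c - 1) Y = c` is the line through `(1, 1)` and `(c, c / 2)`. -/
theorem above_chord_of_cube_add_cube_eq_one (hc : c ^ 3 = 2) {u v : ℝ} (hu : 0 < u) (hv : 0 < v)
    (hne : u ≠ v) (huv : u ^ 3 + v ^ 3 = 1) :
    c < (2 - c) * (u ^ 2 + v ^ 2) + 2 * (c - 1) * (u ^ 5 + v ^ 5) := by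
  have hc1 := one_lt_of_pow_three_eq_two hc
  have hc2 := lt_two_of_pow_three_eq_two hc
  set s := u + v
  have hs1 : 1 < s := one_lt_add_of_cube_add_cube_eq_one hu hv huv
  have hs2 : s < c ^ 2 := by
    refine lt_of_pow_lt_pow_left₀ 3 (by positivity) ?_
    calc s ^ 3 < 4 := add_pow_three_lt_four_of_cube_add_cube_eq_one hu hv hne huv
      _ = (c ^ 2) ^ 3 := by rw [← pow_mul, mul_comm, pow_mul, hc]; norm_num
  have hR : 0 < (c + 2 * c ^ 2) + (2 + 2 * c) * s + 2 * c * (2 - c) * s ^ 2 + (2 * c - 2) * s ^ 3 := by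
    have hs0 : 0 < s := by linarith
    have h₁ : 0 < c + 2 * c ^ 2 := by nlinarith
    have h₂ : 0 < (2 + 2 * c) * s := by nlinarith
    have h₃ : 0 < 2 * c * (2 - c) * s ^ 2 := by
      have : 0 < 2 * c * (2 - c) := by nlinarith
      positivity
    have h₄ : 0 < (2 * c - 2) * s ^ 3 := mul_pos (by linarith) (by positivity)
    linarith
  -- Eliminate `u v` through `3 s u v = s³ - 1`.
  have hfactor : 9 * s * ((2 - c) * (u ^ 2 + v ^ 2) + 2 * (c - 1) * (u ^ 5 + v ^ 5) - c) =
      (s - 1) ^ 2 * (c ^ 2 - s) *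
        ((c + 2 * c ^ 2) + (2 + 2 * c) * s + 2 * c * (2 - c) * s ^ 2 + (2 * c - 2) * s ^ 3) := by
    linear_combination (-30 * (c - 1) * s * (u * v) + 20 * (c - 1) * s ^ 3 + 4 * c + 2) * huv +
      (2 * c * s ^ 4 - 4 * c * s ^ 3 + 4 * c * s - 2 * c - 2 * s ^ 5 + 4 * s ^ 3 - s ^ 2 - 1) * hc
  have hprod : 0 < 9 * s * ((2 - c) * (u ^ 2 + v ^ 2) + 2 * (c - 1) * (u ^ 5 + v ^ 5) - c) := by
    rw [hfactor]
    exact mul_pos (mul_pos (pow_pos (by linarith) 2) (by linarith)) hR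
  linarith [pos_of_mul_pos_right hprod (by positivity)]

theorem sq_add_sq_le_of_cube_add_cube_eq_one (hc0 : 0 < c) (hc : c ^ 3 = 2) {u v : ℝ}
    (hu : 0 ≤ u) (hv : 0 ≤ v) (huv : u ^ 3 + v ^ 3 = 1) : u ^ 2 + v ^ 2 ≤ c := by
  refine le_of_pow_le_pow_left₀ three_ne_zero hc0.le ?_
  simpa [huv, hc] using sq_add_sq_pow_three_le hu hv

end CubeRootTwo

theorem rpow_natCast_div_three {t : ℝ} (ht : 0 ≤ t) (k : ℕ) :
    t ^ ((k : ℝ) / 3) = (t ^ ((1 : ℝ) / 3)) ^ k := by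
  rw [← Real.rpow_natCast, ← Real.rpow_mul ht]
  ring_nf

theorem rpow_one_third_pow_three {t : ℝ} (ht : 0 ≤ t) : (t ^ ((1 : ℝ) / 3)) ^ 3 = t := by
  simpa using (rpow_natCast_div_three ht 3).symm

/-- the one-variable dissociation lemma. -/
theorem dissociation_lemma (lam : ℝ) (hlam : 0 < lam) (f : ℝ → ℝ)
    (hf : ∀ t : ℝ, f t = t ^ ((2:ℝ)/3) + (1 - t) ^ ((2:ℝ)/3) +
      lam * (t ^ ((5:ℝ)/3) + (1 - t) ^ ((5:ℝ)/3))) :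
    ∀ θ ∈ Icc (0:ℝ) 1,
      min (min (f 0) (f (1/2))) (f 1) ≤ f θ ∧
        (θ ≠ 0 → θ ≠ 1/2 → θ ≠ 1 → min (min (f 0) (f (1/2))) (f 1) < f θ) := by
  have hcbrt : ∀ t ∈ Icc (0:ℝ) 1, f t = (t ^ ((1:ℝ)/3)) ^ 2 + ((1 - t) ^ ((1:ℝ)/3)) ^ 2 +
      lam * ((t ^ ((1:ℝ)/3)) ^ 5 + ((1 - t) ^ ((1:ℝ)/3)) ^ 5) := by
    rintro t ⟨ht0, ht1⟩
    have h1t : 0 ≤ 1 - t := by linarith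
    rw [hf, ← rpow_natCast_div_three ht0, ← rpow_natCast_div_three ht0,
      ← rpow_natCast_div_three h1t, ← rpow_natCast_div_three h1t]
    norm_num
  have hf0 : f 0 = 1 + lam * 1 := by norm_num [hcbrt 0 (by norm_num)]
  set w : ℝ := (1/2 : ℝ) ^ ((1:ℝ)/3)
  have hw3 : w ^ 3 = 1/2 := rpow_one_third_pow_three (by norm_num)
  set c := 2 * w ^ 2
  have hc : c ^ 3 = 2 := by linear_combination (8 * w ^ 3 + 4) * hw3
  have hc0 : 0 < c := by positivity
  have hfhalf : f (1/2) = c + lam * (c / 2) := by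
    rw [hcbrt _ (by norm_num), show (1:ℝ) - 1/2 = 1/2 by norm_num]
    linear_combination 2 * lam * w ^ 2 * hw3
  intro θ ⟨hθ0, hθ1⟩
  have hstrict : θ ≠ 0 → θ ≠ 1/2 → θ ≠ 1 → min (min (f 0) (f (1/2))) (f 1) < f θ := by
    intro h0 hhalf h1
    set u := θ ^ ((1:ℝ)/3)
    set v := (1 - θ) ^ ((1:ℝ)/3)
    have hu3 : u ^ 3 = θ := rpow_one_third_pow_three hθ0
    have hv3 : v ^ 3 = 1 - θ := rpow_one_third_pow_three (by linarith)
    have hu : 0 < u := Real.rpow_pos_of_pos (lt_of_le_of_ne hθ0 (Ne.symm h0)) _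
    have hv : 0 < v := Real.rpow_pos_of_pos (by linarith [lt_of_le_of_ne hθ1 h1]) _
    have huv : u ^ 3 + v ^ 3 = 1 := by rw [hu3, hv3]; ring
    have hne : u ≠ v := fun h => hhalf (by linarith [congrArg (· ^ 3) h])
    calc min (min (f 0) (f (1/2))) (f 1) ≤ min (f 0) (f (1/2)) := min_le_left _ _
      _ < f θ := by
        rw [hf0, hfhalf, hcbrt θ ⟨hθ0, hθ1⟩]
        refine min_lt_add_mul_of_above_chord hlam
          (one_le_sq_add_sq_of_cube_add_cube_eq_one hu.le hv.le huv)
          (sq_add_sq_le_of_cube_add_cube_eq_one hc0 hc hu.le hv.le huv) ?_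
        linarith [above_chord_of_cube_add_cube_eq_one hc hu hv hne huv]
  refine ⟨?_, hstrict⟩
  by_cases h0 : θ = 0
  · subst h0; exact (min_le_left _ _).trans (min_le_left _ _)
  by_cases hhalf : θ = 1/2
  · subst hhalf; exact (min_le_left _ _).trans (min_le_right _ _)
  by_cases h1 : θ = 1
  · subst h1; exact min_le_right _ _
  exact (hstrict h0 hhalf h1).le
end
end
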